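/- Let α be uniformly distributed on [−1, 1] and let κ(α) = α. Then for every 0 ≤ a < b ≤ 2π, the probability that zα mod 2π lies in [a, b] converges to (b−a)/(2π) as z → ∞. -/

import Mathlib

open MeasureTheory Set Filter Real

/-- The representative of `x` modulo `2π` lying in `[0, 2π)`. -/
noncomputable def mod2pi (x : ℝ) : ℝ := x - 2 * π * ⌊x / (2 * π)⌋

/-! The event is `{α ∈ [-1, 1] | g (z α) = 1}` for the `2π`-periodic indicator `g` of
`{x | x mod 2π ∈ [a, b]}`, whose mean over a period is `(b - a) / 2π`. Periodicity makes the
primitive of `g` equal to `t (b - a) / 2π + O(1)`, so after the substitution `x = z α` the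
probability is `(b - a) / 2π + O(1 / z)`. -/

open Topology

namespace Function.Periodic

variable {g : ℝ → ℝ} {T : ℝ}

theorem exists_abs_intervalIntegral_sub_le (hg : Periodic g T) (hT : 0 < T)
    (h_int : IntervalIntegrable g volume 0 T) :
    ∃ C, ∀ t, |(∫ x in 0..t, g x) - t / T * ∫ x in 0..T, g x| ≤ C := by
  set I := ∫ x in 0..T, g x
  set m := sInf ((fun t => ∫ x in 0..t, g x) '' Icc 0 T)
  set M := sSup ((fun t => ∫ x in 0..t, g x) '' Icc 0 T)
  refine ⟨max |m| |M| + |I|, fun t => ?_⟩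
  have hlow := hg.sInf_add_zsmul_le_integral_of_pos h_int hT t
  have hhigh := hg.integral_le_sSup_add_zsmul_of_pos h_int hT t
  rw [zsmul_eq_mul] at hlow hhigh
  have hfloor : |(⌊t / T⌋ : ℝ) - t / T| ≤ 1 := by
    rw [abs_sub_comm, Int.self_sub_floor, abs_of_nonneg (Int.fract_nonneg _)]
    exact (Int.fract_lt_one _).le
  calc |(∫ x in 0..t, g x) - t / T * I|
      = |((∫ x in 0..t, g x) - ⌊t / T⌋ * I) + ((⌊t / T⌋ : ℝ) - t / T) * I| := by ring_nf
    _ ≤ |(∫ x in 0..t, g x) - ⌊t / T⌋ * I| + |((⌊t / T⌋ : ℝ) - t / T) * I| := abs_add_le _ _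
    _ ≤ max |m| |M| + |I| := by
      refine add_le_add (abs_le.2 ⟨?_, ?_⟩) ?_
      · linarith [neg_abs_le m, le_max_left |m| |M|]
      · linarith [le_abs_self M, le_max_right |m| |M|]
      · rw [abs_mul]
        exact mul_le_of_le_one_left (abs_nonneg I) hfloor

theorem tendsto_intervalIntegral_comp_mul (hg : Periodic g T) (hT : 0 < T)
    (h_int : IntervalIntegrable g volume 0 T) (a b : ℝ) :
    Tendsto (fun z => ∫ x in a..b, g (z * x)) atTop
      (𝓝 ((b - a) * ((∫ x in 0..T, g x) / T))) := by
  obtain ⟨C, hC⟩ := hg.exists_abs_intervalIntegral_sub_le hT h_int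
  set I := ∫ x in 0..T, g x
  set E := fun t => (∫ x in 0..t, g x) - t / T * I
  have hint := hg.intervalIntegrable₀ hT.ne' h_int
  rw [← tendsto_sub_nhds_zero_iff]
  refine squeeze_zero_norm' ?_ (by simpa using tendsto_inv_atTop_zero.const_mul (2 * C))
  filter_upwards [eventually_gt_atTop 0] with z hz
  have hscale :
      (∫ x in a..b, g (z * x)) - (b - a) * (I / T) = z⁻¹ * (E (z * b) - E (z * a)) := by
    rw [intervalIntegral.integral_comp_mul_left g hz.ne', smul_eq_mul,
      ← intervalIntegral.integral_interval_sub_left (hint _ _) (hint _ _)]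
    simp only [E]
    field_simp
    ring
  rw [hscale, norm_mul, norm_inv, Real.norm_of_nonneg hz.le, mul_comm]
  gcongr
  rw [two_mul]
  exact (norm_sub_le _ _).trans (add_le_add (hC _) (hC _))

end Function.Periodic

theorem measurable_toIcoMod {T : ℝ} (hT : 0 < T) (a : ℝ) : Measurable (toIcoMod hT a) := by
  simp_rw [funext (toIcoMod_eq_add_fract_mul hT a)]
  fun_prop

theorem intervalIntegral_indicator_toIcoMod_preimage {T : ℝ} (hT : 0 < T) (a : ℝ) {s : Set ℝ}
    (hs : MeasurableSet s) :
    ∫ x in a..a + T, (toIcoMod hT a ⁻¹' s).indicator 1 x = volume.real (s ∩ Ioo a (a + T)) := by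
  have hmod : toIcoMod hT a ⁻¹' s ∩ Ioo a (a + T) = s ∩ Ioo a (a + T) := by
    ext x
    simp only [mem_inter_iff, mem_preimage, and_congr_left_iff]
    intro hx
    rw [(toIcoMod_eq_self hT).2 (Ioo_subset_Ico_self hx)]
  rw [intervalIntegral.integral_of_le (by linarith), integral_Ioc_eq_integral_Ioo,
    integral_indicator_one (measurable_toIcoMod hT a hs), measureReal_restrict_apply
      (measurable_toIcoMod hT a hs), hmod]

theorem intervalIntegral_indicator_one {s : Set ℝ} (hs : MeasurableSet s) {a b : ℝ}
    (hab : a ≤ b) : ∫ x in a..b, s.indicator 1 x = volume.real (Icc a b ∩ s) := by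
  rw [intervalIntegral.integral_of_le hab, ← integral_Icc_eq_integral_Ioc,
    integral_indicator_one hs, measureReal_restrict_apply hs, inter_comm]

theorem mod2pi_eq_toIcoMod : mod2pi = toIcoMod two_pi_pos 0 := by
  ext x
  simp [mod2pi, toIcoMod, toIcoDiv_eq_floor, mul_comm]

theorem uniform_phase_equidistribution :
    ∀ a b : ℝ, 0 ≤ a → a < b → b ≤ 2 * π →
      Tendsto (fun z : ℝ =>
          (volume {α ∈ Icc (-1 : ℝ) 1 | mod2pi (z * α) ∈ Icc a b}).toReal / 2)
        atTop (nhds ((b - a) / (2 * π))) := by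
  intro a b ha hab hb
  set A := toIcoMod two_pi_pos 0 ⁻¹' Icc a b
  have hA : MeasurableSet A := measurable_toIcoMod two_pi_pos 0 measurableSet_Icc
  have hper : Function.Periodic (A.indicator (1 : ℝ → ℝ)) (2 * π) :=
    (toIcoMod_periodic two_pi_pos 0).comp ((Icc a b).indicator 1)
  have hmean : ∫ x in 0..2 * π, A.indicator 1 x = b - a := by
    have hperiod := intervalIntegral_indicator_toIcoMod_preimage two_pi_pos 0
      (measurableSet_Icc (a := a) (b := b))
    rw [zero_add] at hperiod
    rw [hperiod, measureReal_congr ((ae_eq_refl _).inter Ioo_ae_eq_Icc),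
      inter_eq_left.2 (Icc_subset_Icc ha hb), Real.volume_real_Icc_of_le hab.le]
  have hlim := hper.tendsto_intervalIntegral_comp_mul two_pi_pos
    (intervalIntegrable_iff.2 ((integrableOn_const measure_Ioc_lt_top.ne).indicator hA)) (-1) 1
  have hprob : ∀ z, (volume {α ∈ Icc (-1 : ℝ) 1 | mod2pi (z * α) ∈ Icc a b}).toReal =
      ∫ x in -1..1, A.indicator 1 (z * x) := fun z => by
    rw [mod2pi_eq_toIcoMod]
    exact (intervalIntegral_indicator_one (hA.preimage (measurable_const_mul z)) (by norm_num)).symm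
  simp_rw [hprob]
  convert hlim.div_const 2 using 2
  rw [hmean]
  ring
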